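/- arXiv:2409.15597 — 2 statements merged into one kernel-verified Lean document; each statement's English description precedes it below -/
import Mathlib

section
/- Fix σ > 0. For every sequence of parameter pairs (μ_m, 𝒯_m) with μ_m → ∞, 𝒯_m → ∞ and √(log 𝒯_m)/μ_m → 0: in the change-point model with change after time τ (X_1,…,X_τ i.i.d. N(0,1), X_{τ+1},…,X_{𝒯_m} i.i.d. N(μ_m, σ²), all independent), the supremum over integers 1 ≤ τ < t ≤ 𝒯_m of P(max_{0≤k<τ} W_{t,k} ≥ max_{τ≤k<t} W_{t,k}) tends to 0 as m → ∞; in particular the maximizer of k ↦ W_{t,k} over 0 ≤ k < t lies in {τ,…,t−1} with probability tending to 1 uniformly in τ and t. -/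
/-!
For `k < τ` split `S_t − S_k = (S_t − S_τ) + (S_τ − S_k)`. The post-change increment
`S_t − S_τ ~ N((t − τ)μ, (t − τ)σ²)` is at least `(t − τ)μ/2` except with probability
`exp(−μ²/(8σ²))`, and each pre-change increment `S_τ − S_k ~ N(0, τ − k)` is smaller than
`μ√(τ − k)/6` in absolute value except with probability `2 exp(−μ²/72)`. Off these events an
elementary inequality gives `W_{t,k} < W_{t,τ}` for every `k < τ`. The union bound over the
`τ ≤ 𝒯` pre-change indices costs a factor `𝒯 = exp(log 𝒯)`, which `exp(−μ²/72)` absorbs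
because `log 𝒯 = o(μ²)`.
-/

open MeasureTheory ProbabilityTheory Filter Real

noncomputable section

/-- Partial sums of a path: `pS X 0 = 0`, `pS X t = X 1 + ⋯ + X t`. -/
def pS (X : ℕ → ℝ) (t : ℕ) : ℝ := ∑ i ∈ Finset.Icc 1 t, X i

/-- GLR quantity `W_{t,k} = |S_t − S_k|/√(t−k)`. -/
def glrW (X : ℕ → ℝ) (t k : ℕ) : ℝ := |pS X t - pS X k| / Real.sqrt ((t : ℝ) - (k : ℝ))

open scoped NNReal

namespace ProbabilityTheory

variable {Ω : Type*} [MeasurableSpace Ω] {P : Measure Ω}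

lemma map_sum_eq_gaussianReal [IsProbabilityMeasure P] {ι : Type*} {X : ι → Ω → ℝ}
    (hX : ∀ i, Measurable (X i)) (hindep : iIndepFun X P) {m : ℝ} {v : ℝ≥0} (s : Finset ι)
    (hlaw : ∀ i ∈ s, P.map (X i) = gaussianReal m v) :
    P.map (∑ i ∈ s, X i) = gaussianReal (s.card * m) (s.card * v) := by
  classical
  induction s using Finset.induction_on with
  | empty => simp [gaussianReal_zero_var, Pi.zero_def, Measure.map_const]
  | insert i s hi ih =>
    rw [Finset.sum_insert hi, Finset.card_insert_of_notMem hi,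
      gaussianReal_add_gaussianReal_of_indepFun (hindep.indepFun_finsetSum_of_notMem hX hi).symm
        (hlaw i (s.mem_insert_self i)) (ih fun j hj => hlaw j (Finset.mem_insert_of_mem hj))]
    push_cast
    ring_nf

lemma map_sum_eq_gaussianReal_of_subset [IsProbabilityMeasure P] {ι : Type*} {X : ι → Ω → ℝ}
    (hX : ∀ i, Measurable (X i)) {S : Set ι} (hindep : iIndepFun (fun i : S => X i) P) {m : ℝ}
    {v : ℝ≥0} {s : Finset ι} (hsS : ↑s ⊆ S) (hlaw : ∀ i ∈ s, P.map (X i) = gaussianReal m v) :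
    P.map (fun ω => ∑ i ∈ s, X i ω) = gaussianReal (s.card * m) (s.card * v) := by
  classical
  have hmem : ∀ i ∈ s, i ∈ S := fun i hi => hsS hi
  have h := map_sum_eq_gaussianReal (fun i : S => hX i) hindep (s.subtype (· ∈ S))
    fun i hi => hlaw i (Finset.mem_subtype.mp hi)
  rw [Finset.card_subtype, Finset.filter_true_of_mem hmem] at h
  rw [← h]
  congr 1
  ext ω
  rw [Finset.sum_apply, Finset.sum_subtype_of_mem (fun i => X i ω) hmem]

lemma hasSubgaussianMGF_id_gaussianReal (v : ℝ≥0) :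
    HasSubgaussianMGF id v (gaussianReal 0 v) where
  integrable_exp_mul := integrable_exp_mul_gaussianReal
  mgf_le t := by simp [mgf_id_gaussianReal]

lemma hasSubgaussianMGF_sub_of_map_eq_gaussianReal {Y : Ω → ℝ} (hY : Measurable Y) {m : ℝ}
    {v : ℝ≥0} (hlaw : P.map Y = gaussianReal m v) :
    HasSubgaussianMGF (fun ω => Y ω - m) v P := by
  rw [← HasSubgaussianMGF.id_map_iff (by fun_prop),
    show (fun ω => Y ω - m) = (· - m) ∘ Y from rfl, ← Measure.map_map (measurable_sub_const m) hY,
    hlaw, gaussianReal_map_sub_const, sub_self]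
  exact hasSubgaussianMGF_id_gaussianReal v

section Tails

variable {Y : Ω → ℝ} {m : ℝ} {v : ℝ≥0}

lemma measureReal_le_sub_le_of_map_eq_gaussianReal (hY : Measurable Y)
    (hlaw : P.map Y = gaussianReal m v) {ε : ℝ} (hε : 0 ≤ ε) :
    P.real {ω | Y ω ≤ m - ε} ≤ rexp (-ε ^ 2 / (2 * v)) := by
  have h := (hasSubgaussianMGF_sub_of_map_eq_gaussianReal hY hlaw).neg.measure_ge_le hε
  calc P.real {ω | Y ω ≤ m - ε} = P.real {ω | ε ≤ (-fun ω => Y ω - m) ω} := by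
        congr 1
        ext ω
        simp only [Set.mem_ofPred_eq, Pi.neg_apply]
        constructor <;> intro <;> linarith
    _ ≤ _ := h

lemma measureReal_add_le_le_of_map_eq_gaussianReal (hY : Measurable Y)
    (hlaw : P.map Y = gaussianReal m v) {ε : ℝ} (hε : 0 ≤ ε) :
    P.real {ω | m + ε ≤ Y ω} ≤ rexp (-ε ^ 2 / (2 * v)) := by
  have h := (hasSubgaussianMGF_sub_of_map_eq_gaussianReal hY hlaw).measure_ge_le hε
  calc P.real {ω | m + ε ≤ Y ω} = P.real {ω | ε ≤ Y ω - m} := by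
        congr 1
        ext ω
        simp only [Set.mem_ofPred_eq]
        constructor <;> intro <;> linarith
    _ ≤ _ := h

lemma measureReal_le_abs_le_of_map_eq_gaussianReal [IsFiniteMeasure P] (hY : Measurable Y)
    (hlaw : P.map Y = gaussianReal 0 v) {ε : ℝ} (hε : 0 ≤ ε) :
    P.real {ω | ε ≤ |Y ω|} ≤ 2 * rexp (-ε ^ 2 / (2 * v)) := by
  have hsub : {ω | ε ≤ |Y ω|} ⊆ {ω | 0 + ε ≤ Y ω} ∪ {ω | Y ω ≤ 0 - ε} := by
    intro ω hω
    rcases le_abs'.mp (show ε ≤ |Y ω| from hω) with h | h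
    · right; simp only [Set.mem_ofPred_eq]; linarith
    · left; simp only [Set.mem_ofPred_eq]; linarith
  calc P.real {ω | ε ≤ |Y ω|} ≤ P.real ({ω | 0 + ε ≤ Y ω} ∪ {ω | Y ω ≤ 0 - ε}) :=
        measureReal_mono hsub
    _ ≤ P.real {ω | 0 + ε ≤ Y ω} + P.real {ω | Y ω ≤ 0 - ε} := measureReal_union_le _ _
    _ ≤ 2 * rexp (-ε ^ 2 / (2 * v)) := by
        linarith [measureReal_add_le_le_of_map_eq_gaussianReal hY hlaw hε,
          measureReal_le_sub_le_of_map_eq_gaussianReal hY hlaw hε]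

end Tails

end ProbabilityTheory

lemma abs_add_div_sqrt_add_lt {μ a b D G : ℝ} (ha : 1 ≤ a) (hb : 1 ≤ b) (hD : a * μ / 2 ≤ D)
    (hG : |G| < μ * √b / 6) : |D + G| / √(a + b) < D / √a := by
  obtain ⟨p, hp1, rfl⟩ : ∃ p, 1 ≤ p ∧ a = p ^ 2 :=
    ⟨√a, Real.one_le_sqrt.mpr ha, (Real.sq_sqrt (by linarith)).symm⟩
  obtain ⟨q, hq1, rfl⟩ : ∃ q, 1 ≤ q ∧ b = q ^ 2 :=
    ⟨√b, Real.one_le_sqrt.mpr hb, (Real.sq_sqrt (by linarith)).symm⟩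
  set r := √(p ^ 2 + q ^ 2)
  rw [Real.sqrt_sq (by linarith)] at hG ⊢
  have hr2 : r ^ 2 = p ^ 2 + q ^ 2 := Real.sq_sqrt (by positivity)
  have hpr : p ≤ r := Real.le_sqrt_of_sq_le (by nlinarith)
  have hrpq : r ≤ p + q := Real.sqrt_le_iff.mpr ⟨by linarith, by nlinarith⟩
  have hμ : 0 < μ := by nlinarith [abs_nonneg G]
  have hDpos : 0 < D := by nlinarith
  -- `r - p = q ^ 2 / (r + p)` and `r + p ≤ 2 p + q ≤ 3 p q` since `p, q ≥ 1`
  have hgap : μ * q * p / 6 ≤ D * (r - p) := by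
    have hsum : r + p ≤ 3 * p * q := by nlinarith
    refine le_of_mul_le_mul_right ?_ (by linarith : 0 < r + p)
    calc μ * q * p / 6 * (r + p) ≤ μ * q * p / 6 * (3 * p * q) := by gcongr
      _ = p ^ 2 * μ / 2 * q ^ 2 := by ring
      _ ≤ D * q ^ 2 := by gcongr
      _ = D * (r - p) * (r + p) := by linear_combination (-D) * hr2
  rw [div_lt_div_iff₀ (by linarith) (by linarith)]
  calc |D + G| * p ≤ (D + |G|) * p := by
        gcongr
        exact (abs_add_le D G).trans_eq (by rw [abs_of_pos hDpos])
    _ < (D + μ * q / 6) * p := by gcongr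
    _ ≤ D * r := by nlinarith

lemma pS_sub_pS (X : ℕ → ℝ) {k t : ℕ} (h : k ≤ t) :
    pS X t - pS X k = ∑ i ∈ Finset.Ioc k t, X i := by
  have hIoc (n : ℕ) : pS X n = ∑ i ∈ Finset.Ioc 0 n, X i := by
    rw [pS, ← Finset.Icc_add_one_left_eq_Ioc, zero_add]
  rw [hIoc, hIoc, ← Finset.sum_Ioc_consecutive X (Nat.zero_le k) h, add_sub_cancel_left]

lemma glrW_lt_glrW {X : ℕ → ℝ} {k τ t : ℕ} {μ : ℝ} (hk : k < τ) (hτt : τ < t)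
    (hD : ((t : ℝ) - τ) * μ / 2 ≤ pS X t - pS X τ)
    (hG : |pS X τ - pS X k| < μ * √((τ : ℝ) - k) / 6) :
    glrW X t k < glrW X t τ := by
  have hkτ : (1 : ℝ) ≤ (τ : ℝ) - k := by
    rw [le_sub_iff_add_le']; exact_mod_cast hk
  have hτt' : (1 : ℝ) ≤ (t : ℝ) - τ := by
    rw [le_sub_iff_add_le']; exact_mod_cast hτt
  have hDpos : 0 < pS X t - pS X τ := by
    nlinarith [abs_nonneg (pS X τ - pS X k), Real.sqrt_nonneg ((τ : ℝ) - k)]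
  have h := abs_add_div_sqrt_add_lt hτt' hkτ hD hG
  rw [glrW, glrW, abs_of_pos hDpos]
  convert h using 3 <;> ring

lemma iSup_glrW_lt_iSup_glrW {X : ℕ → ℝ} {τ t : ℕ} {μ : ℝ} (hτ : 1 ≤ τ) (hτt : τ < t)
    (hD : ((t : ℝ) - τ) * μ / 2 ≤ pS X t - pS X τ)
    (hG : ∀ k < τ, |pS X τ - pS X k| < μ * √((τ : ℝ) - k) / 6) :
    (⨆ k : Fin τ, glrW X t k) < ⨆ k : (Finset.Ico τ t : Finset ℕ), glrW X t k := by
  have : Nonempty (Fin τ) := ⟨⟨0, hτ⟩⟩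
  obtain ⟨k, hk⟩ := exists_eq_ciSup_of_finite (f := fun k : Fin τ => glrW X t k)
  calc (⨆ k : Fin τ, glrW X t k) < glrW X t τ := hk ▸ glrW_lt_glrW k.2 hτt hD (hG k k.2)
    _ ≤ ⨆ k : (Finset.Ico τ t : Finset ℕ), glrW X t k :=
      le_ciSup_of_le (Set.finite_range _).bddAbove ⟨τ, by simp [hτt]⟩ le_rfl

section ChangePoint

variable {Ω : Type*} [MeasurableSpace Ω] {P : Measure Ω} [IsProbabilityMeasure P]
  {X : ℕ → Ω → ℝ} {T : ℕ}

lemma map_pS_sub_pS_eq_gaussianReal (hX : ∀ i, Measurable (X i))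
    (hindep : iIndepFun (fun i : Set.Icc 1 T => X i) P) {a b : ℕ} (hab : a ≤ b) (hbT : b ≤ T)
    {m : ℝ} {v : ℝ≥0} (hlaw : ∀ i, a < i → i ≤ b → P.map (X i) = gaussianReal m v) :
    P.map (fun ω => pS (fun i => X i ω) b - pS (fun i => X i ω) a)
      = gaussianReal ((b - a : ℕ) * m) ((b - a : ℕ) * v) := by
  simp_rw [pS_sub_pS _ hab]
  rw [map_sum_eq_gaussianReal_of_subset hX hindep (s := Finset.Ioc a b), Nat.card_Ioc]
  · intro i hi
    simp only [Finset.coe_Ioc, Set.mem_Ioc] at hi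
    exact ⟨by omega, by omega⟩
  · intro i hi
    rw [Finset.mem_Ioc] at hi
    exact hlaw i hi.1 hi.2

lemma measureReal_pS_sub_pS_le_le (hX : ∀ i, Measurable (X i))
    (hindep : iIndepFun (fun i : Set.Icc 1 T => X i) P) {τ t : ℕ} (hτt : τ < t) (htT : t ≤ T)
    {μ : ℝ} (hμ : 0 ≤ μ) {v : ℝ≥0}
    (hpost : ∀ i, τ < i → i ≤ t → P.map (X i) = gaussianReal μ v) :
    P.real {ω | pS (fun i => X i ω) t - pS (fun i => X i ω) τ
        ≤ ((t : ℝ) - τ) * μ - ((t : ℝ) - τ) * μ / 2} ≤ rexp (-(μ ^ 2 / (8 * v))) := by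
  have hlaw := map_pS_sub_pS_eq_gaussianReal hX hindep hτt.le htT hpost
  have h1 : (1 : ℝ) ≤ (t : ℝ) - τ := by
    rw [le_sub_iff_add_le']; exact_mod_cast hτt
  have h := measureReal_le_sub_le_of_map_eq_gaussianReal
    ((Finset.measurable_sum _ fun i _ => hX i).fun_sub (Finset.measurable_sum _ fun i _ => hX i))
    hlaw (ε := ((t : ℝ) - τ) * μ / 2) (by positivity)
  simp only [NNReal.coe_mul, NNReal.coe_natCast, Nat.cast_sub hτt.le] at h
  refine h.trans (Real.exp_le_exp.mpr ?_)
  rcases eq_or_ne (v : ℝ) 0 with hv | hv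
  · simp [hv]
  · rw [neg_div, neg_le_neg_iff, show (((t : ℝ) - τ) * μ / 2) ^ 2 / (2 * (((t : ℝ) - τ) * v))
        = ((t : ℝ) - τ) * (μ ^ 2 / (8 * v)) by field_simp; ring]
    nlinarith [show 0 ≤ μ ^ 2 / (8 * v) by positivity]

lemma measureReal_le_abs_pS_sub_pS_le (hX : ∀ i, Measurable (X i))
    (hindep : iIndepFun (fun i : Set.Icc 1 T => X i) P) {k τ : ℕ} (hk : k < τ) (hτT : τ ≤ T)
    {μ : ℝ} (hμ : 0 ≤ μ) (hpre : ∀ i, k < i → i ≤ τ → P.map (X i) = gaussianReal 0 1) :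
    P.real {ω | μ * √((τ : ℝ) - k) / 6 ≤ |pS (fun i => X i ω) τ - pS (fun i => X i ω) k|}
      ≤ 2 * rexp (-(μ ^ 2 / 72)) := by
  have hlaw := map_pS_sub_pS_eq_gaussianReal hX hindep hk.le hτT hpre
  have h1 : (1 : ℝ) ≤ (τ : ℝ) - k := by
    rw [le_sub_iff_add_le']; exact_mod_cast hk
  simp only [mul_zero, mul_one] at hlaw
  have h := measureReal_le_abs_le_of_map_eq_gaussianReal
    ((Finset.measurable_sum _ fun i _ => hX i).fun_sub (Finset.measurable_sum _ fun i _ => hX i))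
    hlaw (ε := μ * √((τ : ℝ) - k) / 6) (by positivity)
  simp only [NNReal.coe_natCast, Nat.cast_sub hk.le] at h
  rwa [div_pow, mul_pow, Real.sq_sqrt (by linarith), neg_div,
    show μ ^ 2 * ((τ : ℝ) - k) / 6 ^ 2 / (2 * ((τ : ℝ) - k)) = μ ^ 2 / 72 by field_simp; ring] at h

lemma measureReal_iSup_glrW_le_iSup_glrW_le (hX : ∀ i, Measurable (X i))
    (hindep : iIndepFun (fun i : Set.Icc 1 T => X i) P) {τ t : ℕ} (hτ : 1 ≤ τ) (hτt : τ < t)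
    (htT : t ≤ T) {μ : ℝ} (hμ : 0 ≤ μ) {v : ℝ≥0}
    (hpre : ∀ i, 1 ≤ i → i ≤ τ → P.map (X i) = gaussianReal 0 1)
    (hpost : ∀ i, τ < i → i ≤ t → P.map (X i) = gaussianReal μ v) :
    P.real {ω | (⨆ k : (Finset.Ico τ t : Finset ℕ), glrW (fun i => X i ω) t k)
        ≤ ⨆ k : Fin τ, glrW (fun i => X i ω) t k}
      ≤ rexp (-(μ ^ 2 / (8 * v))) + τ * (2 * rexp (-(μ ^ 2 / 72))) := by
  set A := {ω | pS (fun i => X i ω) t - pS (fun i => X i ω) τ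
    ≤ ((t : ℝ) - τ) * μ - ((t : ℝ) - τ) * μ / 2}
  set B := fun k : ℕ =>
    {ω | μ * √((τ : ℝ) - k) / 6 ≤ |pS (fun i => X i ω) τ - pS (fun i => X i ω) k|}
  have hsub : {ω | (⨆ k : (Finset.Ico τ t : Finset ℕ), glrW (fun i => X i ω) t k)
      ≤ ⨆ k : Fin τ, glrW (fun i => X i ω) t k} ⊆ A ∪ ⋃ k ∈ Finset.range τ, B k := by
    intro ω hω
    by_contra hc
    simp only [A, B, Set.mem_union, Set.mem_iUnion, Finset.mem_range, Set.mem_ofPred_eq, not_or,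
      not_exists, not_le] at hc
    exact not_lt.mpr hω (iSup_glrW_lt_iSup_glrW hτ hτt (by linarith [hc.1]) hc.2)
  calc _ ≤ P.real (A ∪ ⋃ k ∈ Finset.range τ, B k) := measureReal_mono hsub
    _ ≤ P.real A + ∑ k ∈ Finset.range τ, P.real (B k) :=
      (measureReal_union_le _ _).trans (by gcongr; exact measureReal_biUnion_finset_le _ _)
    _ ≤ rexp (-(μ ^ 2 / (8 * v))) + ∑ k ∈ Finset.range τ, 2 * rexp (-(μ ^ 2 / 72)) := by
      gcongr with k hk
      · exact measureReal_pS_sub_pS_le_le hX hindep hτt htT hμ hpost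
      · exact measureReal_le_abs_pS_sub_pS_le hX hindep (Finset.mem_range.mp hk)
          (hτt.le.trans htT) hμ fun i hi hiτ => hpre i (by omega) hiτ
    _ = _ := by simp

end ChangePoint

section Asymptotics

variable {ι : Type*} {l : Filter ι} {μ : ι → ℝ}

lemma tendsto_exp_neg_sq_div (hμ : Tendsto μ l atTop) {c : ℝ} (hc : 0 < c) :
    Tendsto (fun i => rexp (-(μ i ^ 2 / c))) l (nhds 0) :=
  tendsto_exp_atBot.comp <| tendsto_neg_atTop_atBot.comp <|
    ((tendsto_pow_atTop two_ne_zero).comp hμ).atTop_div_const hc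

lemma natCast_mul_exp_le_exp_log_add (n : ℕ) (x : ℝ) :
    (n : ℝ) * rexp x ≤ rexp (Real.log n + x) := by
  rcases n.eq_zero_or_pos with rfl | hn
  · simpa using (Real.exp_pos _).le
  · rw [Real.exp_add, Real.exp_log (by exact_mod_cast hn)]

lemma tendsto_natCast_mul_exp_neg_sq_div {T : ι → ℕ} (hμ : Tendsto μ l atTop)
    (hrate : Tendsto (fun i => √(Real.log (T i)) / μ i) l (nhds 0)) {c : ℝ} (hc : 0 < c) :
    Tendsto (fun i => (T i : ℝ) * rexp (-(μ i ^ 2 / c))) l (nhds 0) := by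
  have hμ2 : Tendsto (fun i => μ i ^ 2) l atTop := (tendsto_pow_atTop two_ne_zero).comp hμ
  have hlog : Tendsto (fun i => Real.log (T i) - μ i ^ 2 / c) l atBot := by
    have hneg : Tendsto (fun i => (√(Real.log (T i)) / μ i) ^ 2 - 1 / c) l
        (nhds (0 ^ 2 - 1 / c)) := (hrate.pow 2).sub_const _
    rw [zero_pow two_ne_zero, zero_sub] at hneg
    refine (hμ2.atTop_mul_neg (neg_lt_zero.mpr (one_div_pos.mpr hc)) hneg).congr' ?_
    filter_upwards [hμ.eventually_gt_atTop 0] with i hi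
    rw [div_pow, Real.sq_sqrt (Real.log_natCast_nonneg _)]
    field_simp
  refine squeeze_zero (fun i => by positivity) (fun i => ?_) (tendsto_exp_atBot.comp hlog)
  simpa [sub_eq_add_neg] using natCast_mul_exp_le_exp_log_add (T i) (-(μ i ^ 2 / c))

end Asymptotics

theorem statement7_general (σ : ℝ) (hσ : 0 < σ) (μs : ℕ → ℝ) (Ts : ℕ → ℕ)
    (hμ : Tendsto μs atTop atTop)
    (hrate : Tendsto (fun m => Real.sqrt (Real.log (Ts m : ℝ)) / μs m) atTop (nhds 0)) :
    ∀ ε : ℝ, 0 < ε → ∃ M : ℕ, ∀ m : ℕ, M ≤ m →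
      ∀ τ t : ℕ, 1 ≤ τ → τ < t → t ≤ Ts m →
      ∀ (Ω : Type) [MeasurableSpace Ω] (P : Measure Ω) [IsProbabilityMeasure P]
        (X : ℕ → Ω → ℝ), (∀ i, Measurable (X i)) →
      iIndepFun (fun i : ↥(Set.Icc 1 (Ts m)) => X (i : ℕ)) P →
      (∀ i, 1 ≤ i → i ≤ τ → Measure.map (X i) P = gaussianReal 0 1) →
      (∀ i, τ < i → i ≤ Ts m → Measure.map (X i) P = gaussianReal (μs m) ((σ ^ 2).toNNReal)) →
      (P {ω | (⨆ k : (Finset.Ico τ t : Finset ℕ), glrW (fun i => X i ω) t (k : ℕ)) ≤ ⨆ k : Fin τ, glrW (fun i => X i ω) t (k : ℕ)}).toReal ≤ ε := by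
  intro ε hε
  have hv : (((σ ^ 2).toNNReal : ℝ≥0) : ℝ) = σ ^ 2 := Real.coe_toNNReal _ (sq_nonneg σ)
  have hpost_small := tendsto_exp_neg_sq_div hμ (by positivity : 0 < 8 * σ ^ 2)
  have hpre_small := tendsto_natCast_mul_exp_neg_sq_div hμ hrate (by norm_num : (0 : ℝ) < 72)
  obtain ⟨M, hM⟩ := eventually_atTop.mp <|
    (hpost_small.eventually (gt_mem_nhds (half_pos hε))).and
      ((hpre_small.eventually (gt_mem_nhds (by positivity : 0 < ε / 4))).and
        (hμ.eventually_ge_atTop 0))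
  refine ⟨M, fun m hm τ t hτ hτt htT Ω _ P _ X hX hindep hpre hpost => ?_⟩
  obtain ⟨hA, hB, hμ0⟩ := hM m hm
  have hτT : (τ : ℝ) ≤ Ts m := by exact_mod_cast (hτt.trans_le htT).le
  calc _ ≤ rexp (-(μs m ^ 2 / (8 * (σ ^ 2).toNNReal))) + τ * (2 * rexp (-(μs m ^ 2 / 72))) :=
        measureReal_iSup_glrW_le_iSup_glrW_le hX hindep hτ hτt htT hμ0 hpre
          fun i hi hit => hpost i hi (hit.trans htT)
    _ ≤ ε / 2 + 2 * (Ts m * rexp (-(μs m ^ 2 / 72))) := by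
        rw [hv]
        have := mul_le_mul_of_nonneg_right hτT (Real.exp_pos (-(μs m ^ 2 / 72))).le
        linarith
    _ ≤ ε := by linarith

/-- with μ_m → ∞, 𝒯_m → ∞, √(log 𝒯_m)/μ_m → 0, the probability that the GLR maximum over pre-change indices 0 ≤ k < τ dominates the maximum over post-change indices τ ≤ k < t tends to 0 uniformly in 1 ≤ τ < t ≤ 𝒯_m. -/
theorem statement7 (σ : ℝ) (hσ : 0 < σ) (μs : ℕ → ℝ) (Ts : ℕ → ℕ)
    (hμ : Tendsto μs atTop atTop) (hT : Tendsto Ts atTop atTop)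
    (hrate : Tendsto (fun m => Real.sqrt (Real.log (Ts m : ℝ)) / μs m) atTop (nhds 0)) :
    ∀ ε : ℝ, 0 < ε → ∃ M : ℕ, ∀ m : ℕ, M ≤ m →
      ∀ τ t : ℕ, 1 ≤ τ → τ < t → t ≤ Ts m →
      ∀ (Ω : Type) [MeasurableSpace Ω] (P : Measure Ω) [IsProbabilityMeasure P]
        (X : ℕ → Ω → ℝ), (∀ i, Measurable (X i)) →
      iIndepFun (fun i : ↥(Set.Icc 1 (Ts m)) => X (i : ℕ)) P →
      (∀ i, 1 ≤ i → i ≤ τ → Measure.map (X i) P = gaussianReal 0 1) →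
      (∀ i, τ < i → i ≤ Ts m → Measure.map (X i) P = gaussianReal (μs m) ((σ ^ 2).toNNReal)) →
      (P {ω | (⨆ k : (Finset.Ico τ t : Finset ℕ), glrW (fun i => X i ω) t (k : ℕ)) ≤ ⨆ k : Fin τ, glrW (fun i => X i ω) t (k : ℕ)}).toReal ≤ ε :=
  statement7_general σ hσ μs Ts hμ hrate
end
end

section
/- Fix σ > 0. For every sequence of parameter pairs (μ_m, 𝒯_m) with μ_m → ∞, 𝒯_m → ∞ and √(log 𝒯_m)/μ_m → 0: in the change-point model with change after time τ (X_1,…,X_τ i.i.d. N(0,1), X_{τ+1},…,X_{𝒯_m} i.i.d. N(μ_m, σ²), all independent) and CUSUM drift parameter μ_m, the supremum over integers 1 ≤ τ ≤ t ≤ 𝒯_m of P(Y_t^LR ≠ max_{τ≤k≤t} V_{t,k}) tends to 0 as m → ∞. -/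
open MeasureTheory ProbabilityTheory Filter Real

noncomputable section

/-- CUSUM quantity `V_{t,k}` with drift parameter μ. -/
def cusumV (μ : ℝ) (X : ℕ → ℝ) (t k : ℕ) : ℝ :=
  (pS X t - pS X k - μ / 2 * ((t : ℝ) - (k : ℝ))) * μ

/-- CUSUM statistic `Y_t^LR = max_{0 ≤ k ≤ t} V_{t,k}`. -/
def Ylr (μ : ℝ) (X : ℕ → ℝ) (t : ℕ) : ℝ := ⨆ k : Fin (t + 1), cusumV μ X t (k : ℕ)

/-!
A maximiser of `k ↦ V_{t,k}` can lie before `τ` only if `V_{t,k} > V_{t,τ}` for some `k < τ`,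
i.e. the pre-change increment `S_τ - S_k`, a sum of `τ - k` independent standard Gaussians,
exceeds `(μ/2)(τ - k)`. The Gaussian Chernoff bound makes this event have probability at most
`exp (-μ²(τ - k)/8) ≤ exp (-μ²/8)`, so a union bound over `k` gives `𝒯 exp (-μ²/8)`, which is
at most `exp (-μ²/16)` as soon as `√(log 𝒯) ≤ μ/4`.
-/

open scoped NNReal

lemma pS_sub_pS_eq_sum_Ioc (X : ℕ → ℝ) {k n : ℕ} (h : k ≤ n) :
    pS X n - pS X k = ∑ i ∈ Finset.Ioc k n, X i := by
  have hIcc : ∀ m, pS X m = ∑ i ∈ Finset.Ioc 0 m, X i := fun _ => rfl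
  rw [hIcc, hIcc, ← Finset.sum_Ioc_consecutive _ (Nat.zero_le k) h, add_sub_cancel_left]

lemma cusumV_sub_cusumV (μ : ℝ) (X : ℕ → ℝ) (t : ℕ) {k n : ℕ} (h : k ≤ n) :
    cusumV μ X t k - cusumV μ X t n = μ * (∑ i ∈ Finset.Ioc k n, X i - μ / 2 * (n - k)) := by
  rw [← pS_sub_pS_eq_sum_Ioc X h]
  unfold cusumV
  ring

lemma ciSup_fin_succ_eq_ciSup_Icc_of_le (f : ℕ → ℝ) {τ t : ℕ} (hτt : τ ≤ t)
    (h : ∀ k < τ, f k ≤ f τ) :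
    ⨆ k : Fin (t + 1), f k = ⨆ k : (Finset.Icc τ t : Finset ℕ), f k := by
  have hτ : τ ∈ Finset.Icc τ t := Finset.mem_Icc.mpr ⟨le_rfl, hτt⟩
  have : Nonempty (Finset.Icc τ t : Finset ℕ) := ⟨⟨τ, hτ⟩⟩
  have hbdd : BddAbove (Set.range fun k : (Finset.Icc τ t : Finset ℕ) => f k) :=
    (Set.finite_range _).bddAbove
  apply le_antisymm
  · refine ciSup_le fun k => ?_
    by_cases hk : τ ≤ (k : ℕ)
    · exact le_ciSup_of_le hbdd ⟨k, Finset.mem_Icc.mpr ⟨hk, Nat.lt_succ_iff.mp k.isLt⟩⟩ le_rfl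
    · exact le_ciSup_of_le hbdd ⟨τ, hτ⟩ (h k (not_le.mp hk))
  · refine ciSup_le fun k => ?_
    exact le_ciSup_of_le (Set.finite_range _).bddAbove
      (⟨k, Nat.lt_succ_of_le (Finset.mem_Icc.mp k.2).2⟩ : Fin (t + 1)) le_rfl

lemma exists_lt_le_sum_Ioc_of_Ylr_ne {μ : ℝ} (hμ : 0 < μ) (X : ℕ → ℝ) {τ t : ℕ} (hτt : τ ≤ t)
    (hne : Ylr μ X t ≠ ⨆ k : (Finset.Icc τ t : Finset ℕ), cusumV μ X t k) :
    ∃ k < τ, μ / 2 * (τ - k) ≤ ∑ i ∈ Finset.Ioc k τ, X i := by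
  by_contra! hlt
  refine hne (ciSup_fin_succ_eq_ciSup_Icc_of_le _ hτt fun k hk => ?_)
  have := cusumV_sub_cusumV μ X t hk.le
  nlinarith [hlt k hk]

namespace ProbabilityTheory

variable {Ω : Type*} [MeasurableSpace Ω] {P : Measure Ω} [IsProbabilityMeasure P]

lemma hasSubgaussianMGF_of_map_eq_gaussianReal {X : Ω → ℝ} {v : ℝ≥0}
    (hX : P.map X = gaussianReal 0 v) : HasSubgaussianMGF X v P where
  integrable_exp_mul t := mgf_pos_iff.mp (by rw [mgf_gaussianReal hX]; positivity)
  mgf_le t := by rw [mgf_gaussianReal hX, zero_mul, zero_add]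

lemma measureReal_sum_ge_le_of_iIndepFun_subtype {ι : Type*} {S : Set ι} {X : ι → Ω → ℝ}
    (hind : iIndepFun (fun i : S => X i) P) {s : Finset ι} (hsS : ∀ i ∈ s, i ∈ S)
    (hgauss : ∀ i ∈ s, P.map (X i) = gaussianReal 0 1) {c : ℝ} (hc : 0 ≤ c) :
    P.real {ω | c ≤ ∑ i ∈ s, X i ω} ≤ rexp (-c ^ 2 / (2 * s.card)) := by
  classical
  have hsum : ∀ ω, ∑ i ∈ s.subtype (· ∈ S), X i ω = ∑ i ∈ s, X i ω := fun ω =>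
    Finset.sum_subtype_of_mem (fun i => X i ω) hsS
  have hcard : ∑ _i ∈ s.subtype (· ∈ S), (1 : ℝ≥0) = s.card := by
    rw [Finset.sum_subtype_of_mem (fun _ => (1 : ℝ≥0)) hsS, Finset.sum_const, nsmul_one]
  have h := HasSubgaussianMGF.measure_sum_ge_le_of_iIndepFun hind (c := fun _ => 1)
    (s := s.subtype (· ∈ S)) (fun i hi => hasSubgaussianMGF_of_map_eq_gaussianReal
      (hgauss i (Finset.mem_subtype.mp hi))) hc
  simpa only [hsum, hcard, NNReal.coe_natCast] using h

end ProbabilityTheory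

lemma measureReal_half_drift_le_sum_Ioc_le {Ω : Type*} [MeasurableSpace Ω] {P : Measure Ω}
    [IsProbabilityMeasure P] {μ : ℝ} (hμ : 0 ≤ μ) {T τ k : ℕ} (hk : k < τ) (hτT : τ ≤ T)
    {X : ℕ → Ω → ℝ} (hind : iIndepFun (fun i : ↥(Set.Icc 1 T) => X (i : ℕ)) P)
    (hgauss : ∀ i, 1 ≤ i → i ≤ τ → P.map (X i) = gaussianReal 0 1) :
    P.real {ω | μ / 2 * (τ - k) ≤ ∑ i ∈ Finset.Ioc k τ, X i ω} ≤ rexp (-μ ^ 2 / 8) := by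
  have hmem : ∀ i ∈ Finset.Ioc k τ, 1 ≤ i ∧ i ≤ τ := fun i hi => by
    rw [Finset.mem_Ioc] at hi; omega
  have hlen : (1 : ℝ) ≤ τ - k := by
    rw [le_sub_iff_add_le']; exact_mod_cast hk
  have hcard : ((Finset.Ioc k τ).card : ℝ) = τ - k := by
    rw [Nat.card_Ioc, Nat.cast_sub hk.le]
  calc _ ≤ rexp (-(μ / 2 * (τ - k)) ^ 2 / (2 * (Finset.Ioc k τ).card)) :=
        measureReal_sum_ge_le_of_iIndepFun_subtype hind
          (fun i hi => ⟨(hmem i hi).1, (hmem i hi).2.trans hτT⟩)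
          (fun i hi => hgauss i (hmem i hi).1 (hmem i hi).2) (by positivity)
    _ = rexp (-μ ^ 2 / 8 * (τ - k)) := by
        rw [hcard]
        congr 1
        field_simp [(by linarith : (τ : ℝ) - k ≠ 0)]
        norm_num
    _ ≤ rexp (-μ ^ 2 / 8) := by
        gcongr
        nlinarith [sq_nonneg μ]

lemma measureReal_Ylr_ne_le {Ω : Type*} [MeasurableSpace Ω] {P : Measure Ω}
    [IsProbabilityMeasure P] {μ : ℝ} (hμ : 0 < μ) {T τ t : ℕ} (hτt : τ ≤ t) (hτT : τ ≤ T)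
    {X : ℕ → Ω → ℝ} (hind : iIndepFun (fun i : ↥(Set.Icc 1 T) => X (i : ℕ)) P)
    (hgauss : ∀ i, 1 ≤ i → i ≤ τ → P.map (X i) = gaussianReal 0 1) :
    P.real {ω | Ylr μ (fun i => X i ω) t ≠
        ⨆ k : (Finset.Icc τ t : Finset ℕ), cusumV μ (fun i => X i ω) t k}
      ≤ τ * rexp (-μ ^ 2 / 8) := by
  calc _ ≤ P.real (⋃ k ∈ Finset.range τ,
        {ω | μ / 2 * (τ - k) ≤ ∑ i ∈ Finset.Ioc k τ, X i ω}) := by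
        refine measureReal_mono (fun ω hω => ?_) (measure_ne_top P _)
        obtain ⟨k, hk, hle⟩ := exists_lt_le_sum_Ioc_of_Ylr_ne hμ _ hτt hω
        exact Set.mem_biUnion (Finset.mem_range.mpr hk) hle
    _ ≤ ∑ k ∈ Finset.range τ, P.real {ω | μ / 2 * (τ - k) ≤ ∑ i ∈ Finset.Ioc k τ, X i ω} :=
        measureReal_biUnion_finset_le _ _
    _ ≤ ∑ _k ∈ Finset.range τ, rexp (-μ ^ 2 / 8) :=
        Finset.sum_le_sum fun k hk =>
          measureReal_half_drift_le_sum_Ioc_le hμ.le (Finset.mem_range.mp hk) hτT hind hgauss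
    _ = τ * rexp (-μ ^ 2 / 8) := by
        rw [Finset.sum_const, Finset.card_range, nsmul_eq_mul]

lemma natCast_mul_exp_neg_sq_div_eight_le {T : ℕ} {μ : ℝ} (hμ : 0 ≤ μ)
    (h : √(Real.log T) ≤ μ / 4) : T * rexp (-μ ^ 2 / 8) ≤ rexp (-μ ^ 2 / 16) := by
  rcases Nat.eq_zero_or_pos T with rfl | hT
  · simpa using (Real.exp_pos _).le
  have hlog : Real.log T ≤ μ ^ 2 / 16 :=
    ((Real.sqrt_le_left (by positivity)).mp h).trans_eq (by ring)
  calc (T : ℝ) * rexp (-μ ^ 2 / 8) = rexp (Real.log T + -μ ^ 2 / 8) := by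
        rw [Real.exp_add, Real.exp_log (by exact_mod_cast hT)]
    _ ≤ rexp (-μ ^ 2 / 16) := Real.exp_le_exp.mpr (by linarith)

lemma tendsto_natCast_mul_exp_neg_sq_div_eight {μs : ℕ → ℝ} {Ts : ℕ → ℕ}
    (hμ : Tendsto μs atTop atTop)
    (hrate : Tendsto (fun m => √(Real.log (Ts m)) / μs m) atTop (nhds 0)) :
    Tendsto (fun m => (Ts m : ℝ) * rexp (-μs m ^ 2 / 8)) atTop (nhds 0) := by
  have hdecay : Tendsto (fun m => rexp (-μs m ^ 2 / 16)) atTop (nhds 0) := by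
    refine Real.tendsto_exp_atBot.comp (Tendsto.atBot_div_const (by norm_num) ?_)
    exact tendsto_neg_atTop_atBot.comp ((tendsto_pow_atTop two_ne_zero).comp hμ)
  refine tendsto_of_tendsto_of_tendsto_of_le_of_le' tendsto_const_nhds hdecay
    (Eventually.of_forall fun m => by positivity) ?_
  filter_upwards [hμ.eventually_gt_atTop 0,
    hrate.eventually (gt_mem_nhds (by norm_num : (0 : ℝ) < 1 / 4))] with m hpos hsmall
  refine natCast_mul_exp_neg_sq_div_eight_le hpos.le ?_
  rw [div_lt_iff₀ hpos] at hsmall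
  linarith

theorem statement8_general (σ : ℝ) (μs : ℕ → ℝ) (Ts : ℕ → ℕ)
    (hμ : Tendsto μs atTop atTop)
    (hrate : Tendsto (fun m => Real.sqrt (Real.log (Ts m : ℝ)) / μs m) atTop (nhds 0)) :
    ∀ ε : ℝ, 0 < ε → ∃ M : ℕ, ∀ m : ℕ, M ≤ m →
      ∀ τ t : ℕ, 1 ≤ τ → τ ≤ t → t ≤ Ts m →
      ∀ (Ω : Type) [MeasurableSpace Ω] (P : Measure Ω) [IsProbabilityMeasure P]
        (X : ℕ → Ω → ℝ), (∀ i, Measurable (X i)) →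
      iIndepFun (fun i : ↥(Set.Icc 1 (Ts m)) => X (i : ℕ)) P →
      (∀ i, 1 ≤ i → i ≤ τ → Measure.map (X i) P = gaussianReal 0 1) →
      (∀ i, τ < i → i ≤ Ts m → Measure.map (X i) P = gaussianReal (μs m) ((σ ^ 2).toNNReal)) →
      (P {ω | Ylr (μs m) (fun i => X i ω) t ≠ ⨆ k : (Finset.Icc τ t : Finset ℕ), cusumV (μs m) (fun i => X i ω) t (k : ℕ)}).toReal ≤ ε := by
  intro ε hε
  obtain ⟨M, hM⟩ := eventually_atTop.mp <| (hμ.eventually_gt_atTop 0).and <|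
    (tendsto_natCast_mul_exp_neg_sq_div_eight hμ hrate).eventually (ge_mem_nhds hε)
  refine ⟨M, fun m hm τ t _ hτt htT Ω _ P _ X _ hind hgauss _ => ?_⟩
  obtain ⟨hpos, hsmall⟩ := hM m hm
  calc P.real _ ≤ τ * rexp (-μs m ^ 2 / 8) :=
        measureReal_Ylr_ne_le hpos hτt (hτt.trans htT) hind hgauss
    _ ≤ Ts m * rexp (-μs m ^ 2 / 8) := by gcongr; exact_mod_cast hτt.trans htT
    _ ≤ ε := hsmall

/-- with μ_m → ∞, 𝒯_m → ∞, √(log 𝒯_m)/μ_m → 0, P(Y_t^LR ≠ max_{τ≤k≤t} V_{t,k}) tends to 0 uniformly in 1 ≤ τ ≤ t ≤ 𝒯_m. -/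
theorem statement8 (σ : ℝ) (hσ : 0 < σ) (μs : ℕ → ℝ) (Ts : ℕ → ℕ)
    (hμ : Tendsto μs atTop atTop) (hT : Tendsto Ts atTop atTop)
    (hrate : Tendsto (fun m => Real.sqrt (Real.log (Ts m : ℝ)) / μs m) atTop (nhds 0)) :
    ∀ ε : ℝ, 0 < ε → ∃ M : ℕ, ∀ m : ℕ, M ≤ m →
      ∀ τ t : ℕ, 1 ≤ τ → τ ≤ t → t ≤ Ts m →
      ∀ (Ω : Type) [MeasurableSpace Ω] (P : Measure Ω) [IsProbabilityMeasure P]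
        (X : ℕ → Ω → ℝ), (∀ i, Measurable (X i)) →
      iIndepFun (fun i : ↥(Set.Icc 1 (Ts m)) => X (i : ℕ)) P →
      (∀ i, 1 ≤ i → i ≤ τ → Measure.map (X i) P = gaussianReal 0 1) →
      (∀ i, τ < i → i ≤ Ts m → Measure.map (X i) P = gaussianReal (μs m) ((σ ^ 2).toNNReal)) →
      (P {ω | Ylr (μs m) (fun i => X i ω) t ≠ ⨆ k : (Finset.Icc τ t : Finset ℕ), cusumV (μs m) (fun i => X i ω) t (k : ℕ)}).toReal ≤ ε :=
  statement8_general σ μs Ts hμ hrate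

end
end
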